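/- arXiv:1603.04073 — 8 statements merged into one kernel-verified Lean document; each statement's English description precedes it below -/
import Mathlib

section
/- Let Λ be a real inner product space, μ > 0, γ ∈ (1/2, 1], β := 2γ − 1, C > 0 and c ∈ (0,1]. Let R : Λ → Λ be a linear map and a, N : Λ → ℝ functions such that for every φ ∈ Λ: (i) ⟨Rφ, φ⟩ = γ‖φ‖² − (1/(2μ)) a(φ); (ii) N(φ) ≥ 0 and μ‖φ‖² − a(φ) ≥ c · N(φ); (iii) ‖Rφ‖² ≤ (β²C + 1/μ) · N(φ). Then for every φ ∈ Λ one has the contraction estimate ‖Rφ − βφ‖² ≤ (1 − cβ/(μβ²C + 1)) · ‖Rφ‖². -/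
open scoped RealInnerProductSpace

theorem stmt_0
    {Λ : Type*} [NormedAddCommGroup Λ] [InnerProductSpace ℝ Λ]
    (μ γ C c : ℝ) (hμ : 0 < μ) (hγ : 1 / 2 < γ ∧ γ ≤ 1) (hC : 0 < C)
    (hc : 0 < c ∧ c ≤ 1)
    (β : ℝ) (hβ : β = 2 * γ - 1)
    (R : Λ →ₗ[ℝ] Λ) (a N : Λ → ℝ)
    (h1 : ∀ φ : Λ, ⟪R φ, φ⟫ = γ * ‖φ‖ ^ 2 - (1 / (2 * μ)) * a φ)
    (h2 : ∀ φ : Λ, 0 ≤ N φ ∧ μ * ‖φ‖ ^ 2 - a φ ≥ c * N φ)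
    (h3 : ∀ φ : Λ, ‖R φ‖ ^ 2 ≤ (β ^ 2 * C + 1 / μ) * N φ) :
    ∀ φ : Λ, ‖R φ - β • φ‖ ^ 2 ≤ (1 - c * β / (μ * β ^ 2 * C + 1)) * ‖R φ‖ ^ 2 := by
  intro φ
  obtain ⟨hγ1, hγ2⟩ := hγ
  obtain ⟨hc1, hc2⟩ := hc
  have hβpos : 0 < β := by rw [hβ]; linarith
  have hμne : μ ≠ 0 := ne_of_gt hμ
  have hK : 0 < β ^ 2 * C + 1 / μ := by positivity
  have hK2 : 0 < μ * β ^ 2 * C + 1 := by positivity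
  have key : ‖R φ - β • φ‖ ^ 2 = ‖R φ‖ ^ 2 - (β / μ) * (μ * ‖φ‖ ^ 2 - a φ) := by
    have hn : ‖R φ - β • φ‖ ^ 2
        = ‖R φ‖ ^ 2 - 2 * ⟪R φ, β • φ⟫ + ‖β • φ‖ ^ 2 := by
      rw [@norm_sub_sq_real]
    have h5 : ⟪R φ, β • φ⟫ = β * ⟪R φ, φ⟫ := real_inner_smul_right _ _ _
    have h6 : ‖β • φ‖ ^ 2 = β ^ 2 * ‖φ‖ ^ 2 := by
      rw [norm_smul, Real.norm_eq_abs, abs_of_pos hβpos]; ring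
    rw [hn, h5, h6, h1 φ]
    subst hβ
    field_simp
    ring
  obtain ⟨hN0, h2φ⟩ := h2 φ
  have h3φ := h3 φ
  have hNge : ‖R φ‖ ^ 2 / (β ^ 2 * C + 1 / μ) ≤ N φ :=
    (div_le_iff₀ hK).2 (by linarith [h3φ])
  have hmain : c * β / (μ * β ^ 2 * C + 1) * ‖R φ‖ ^ 2
      ≤ (β / μ) * (μ * ‖φ‖ ^ 2 - a φ) := by
    have h7 : c * β / (μ * β ^ 2 * C + 1) * ‖R φ‖ ^ 2
        = (β / μ) * (c * (‖R φ‖ ^ 2 / (β ^ 2 * C + 1 / μ))) := by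
      field_simp
    rw [h7]
    have h8 : c * (‖R φ‖ ^ 2 / (β ^ 2 * C + 1 / μ)) ≤ c * N φ :=
      mul_le_mul_of_nonneg_left hNge (le_of_lt hc1)
    have h9 : (0:ℝ) ≤ β / μ := by positivity
    calc (β / μ) * (c * (‖R φ‖ ^ 2 / (β ^ 2 * C + 1 / μ)))
        ≤ (β / μ) * (c * N φ) := mul_le_mul_of_nonneg_left h8 h9
      _ ≤ (β / μ) * (μ * ‖φ‖ ^ 2 - a φ) := mul_le_mul_of_nonneg_left h2φ h9
  rw [key]
  nlinarith [hmain]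
end

section
/- Let I be a finite index set and, for each ordered pair (i,j) with i ≠ j, let E_{ij} be a real inner product space together with linear isometric equivalences τ_{ij} : E_{ij} ≃ E_{ji} satisfying τ_{ji} = τ_{ij}⁻¹. For each i let Λ_i be the ℓ²-direct sum of the spaces E_{ij} over j ≠ i (so ‖φ_i‖² = Σ_j ‖(φ_i)_{ij}‖²). Fix μ > 0, γ ∈ (1/2,1], β := 2γ−1, C > 0, c ∈ (0,1], and for each i a linear map R_i : Λ_i → Λ_i and functions a_i, N_i : Λ_i → ℝ satisfying for all φ ∈ Λ_i: (i) ⟨R_iφ, φ⟩ = γ‖φ‖² − (1/(2μ)) a_i(φ); (ii) N_i(φ) ≥ 0 and μ‖φ‖² − a_i(φ) ≥ c·N_i(φ); (iii) ‖R_iφ‖² ≤ (β²C + 1/μ)·N_i(φ). Suppose two families (φ_i^{new})_{i∈I} and (φ_i^{old})_{i∈I} with φ_i^{new}, φ_i^{old} ∈ Λ_i are related by the exchange rule (R_i φ_i^{new})_{ij} = τ_{ji}( β (φ_j^{old})_{ji} − (R_j φ_j^{old})_{ji} ) for all i and all j ≠ i. Then Σ_i ‖R_i φ_i^{new}‖²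 ≤ (1 − cβ/(μβ²C + 1)) · Σ_i ‖R_i φ_i^{old}‖². -/
open scoped RealInnerProductSpace

theorem stmt_1
    {I : Type*} [Fintype I] [DecidableEq I]
    (E : I → I → Type*)
    [∀ i j, NormedAddCommGroup (E i j)] [∀ i j, InnerProductSpace ℝ (E i j)]
    (τ : ∀ i j, E i j ≃ₗᵢ[ℝ] E j i)
    (hτ : ∀ i j, τ j i = (τ i j).symm)
    (μ γ C c : ℝ) (hμ : 0 < μ) (hγ : 1 / 2 < γ ∧ γ ≤ 1) (hC : 0 < C)
    (hc : 0 < c ∧ c ≤ 1)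
    (β : ℝ) (hβ : β = 2 * γ - 1)
    (R : ∀ i : I,
      PiLp 2 (fun j : {j : I // j ≠ i} => E i j.val) →ₗ[ℝ]
        PiLp 2 (fun j : {j : I // j ≠ i} => E i j.val))
    (a N : ∀ i : I, PiLp 2 (fun j : {j : I // j ≠ i} => E i j.val) → ℝ)
    (h1 : ∀ (i : I) (φ : PiLp 2 (fun j : {j : I // j ≠ i} => E i j.val)),
      ⟪R i φ, φ⟫ = γ * ‖φ‖ ^ 2 - (1 / (2 * μ)) * a i φ)
    (h2 : ∀ (i : I) (φ : PiLp 2 (fun j : {j : I // j ≠ i} => E i j.val)),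
      0 ≤ N i φ ∧ μ * ‖φ‖ ^ 2 - a i φ ≥ c * N i φ)
    (h3 : ∀ (i : I) (φ : PiLp 2 (fun j : {j : I // j ≠ i} => E i j.val)),
      ‖R i φ‖ ^ 2 ≤ (β ^ 2 * C + 1 / μ) * N i φ)
    (φnew φold : ∀ i : I, PiLp 2 (fun j : {j : I // j ≠ i} => E i j.val))
    (hexch : ∀ (i : I) (j : {j : I // j ≠ i}),
      R i (φnew i) j =
        τ j.val i
          (β • φold j.val ⟨i, Ne.symm j.prop⟩ -
            R j.val (φold j.val) ⟨i, Ne.symm j.prop⟩)) :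
    ∑ i : I, ‖R i (φnew i)‖ ^ 2 ≤
      (1 - c * β / (μ * β ^ 2 * C + 1)) * ∑ i : I, ‖R i (φold i)‖ ^ 2 := by

  obtain ⟨hγ1, hγ2⟩ := hγ
  obtain ⟨hc0, hc1⟩ := hc
  have hβ0 : 0 < β := by rw [hβ]; linarith
  have hden : 0 < μ * β ^ 2 * C + 1 := by positivity
  have hden2 : 0 < β ^ 2 * C + 1 / μ := by positivity
  -- per-index estimate
  have key : ∀ i : I, ‖β • φold i - R i (φold i)‖ ^ 2 ≤
      (1 - c * β / (μ * β ^ 2 * C + 1)) * ‖R i (φold i)‖ ^ 2 := by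
    intro i
    set φ := φold i with hφ
    have hin := h1 i φ
    have hN := h2 i φ
    have hR := h3 i φ
    have expand : ‖β • φ - R i φ‖ ^ 2
        = ‖R i φ‖ ^ 2 - (β / μ) * (μ * ‖φ‖ ^ 2 - a i φ) := by
      rw [norm_sub_sq_real, real_inner_smul_left, real_inner_comm, hin, norm_smul,
        Real.norm_eq_abs, abs_of_pos hβ0, hβ]
      have hμ' : (μ : ℝ) ≠ 0 := ne_of_gt hμ
      field_simp
      ring
    rw [expand]
    have hN2 : ‖R i φ‖ ^ 2 / (β ^ 2 * C + 1 / μ) ≤ N i φ := by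
      rw [div_le_iff₀ hden2]
      rw [mul_comm] at hR
      exact hR
    have step1 : c * (‖R i φ‖ ^ 2 / (β ^ 2 * C + 1 / μ)) ≤ c * N i φ :=
      mul_le_mul_of_nonneg_left hN2 hc0.le
    have step2 : (β / μ) * (c * N i φ) ≤ (β / μ) * (μ * ‖φ‖ ^ 2 - a i φ) :=
      mul_le_mul_of_nonneg_left hN.2 (by positivity)
    have step3 : (β / μ) * (c * (‖R i φ‖ ^ 2 / (β ^ 2 * C + 1 / μ)))
        ≤ (β / μ) * (c * N i φ) :=
      mul_le_mul_of_nonneg_left step1 (by positivity)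
    have hid : (β / μ) * (c * (‖R i φ‖ ^ 2 / (β ^ 2 * C + 1 / μ)))
        = c * β / (μ * β ^ 2 * C + 1) * ‖R i φ‖ ^ 2 := by
      have hμ' : (μ : ℝ) ≠ 0 := ne_of_gt hμ
      field_simp
    linarith
  -- rewrite LHS via the exchange rule
  have swap : ∀ (F : ∀ j : I, {k : I // k ≠ j} → ℝ),
      ∑ i : I, ∑ j : {j : I // j ≠ i}, F j.val ⟨i, Ne.symm j.prop⟩
        = ∑ j : I, ∑ k : {k : I // k ≠ j}, F j k := by
    intro F
    calc ∑ i : I, ∑ j : {j : I // j ≠ i}, F j.val ⟨i, Ne.symm j.prop⟩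
        = ∑ p : Σ i : I, {j : I // j ≠ i}, F p.2.val ⟨p.1, Ne.symm p.2.prop⟩ := by
          rw [← Finset.univ_sigma_univ, Finset.sum_sigma]
      _ = ∑ q : Σ j : I, {k : I // k ≠ j}, F q.1 q.2 :=
          Fintype.sum_equiv
            ⟨fun p => ⟨p.2.val, ⟨p.1, Ne.symm p.2.prop⟩⟩,
             fun p => ⟨p.2.val, ⟨p.1, Ne.symm p.2.prop⟩⟩,
             fun p => rfl, fun p => rfl⟩ _ _ (fun p => rfl)
      _ = ∑ j : I, ∑ k : {k : I // k ≠ j}, F j k := by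
          rw [← Finset.univ_sigma_univ, Finset.sum_sigma]
  have lhs_eq : ∑ i : I, ‖R i (φnew i)‖ ^ 2
      = ∑ j : I, ‖β • φold j - R j (φold j)‖ ^ 2 := by
    have step : ∀ i : I, ‖R i (φnew i)‖ ^ 2
        = ∑ j : {j : I // j ≠ i},
            ‖(β • φold j.val - R j.val (φold j.val)) ⟨i, Ne.symm j.prop⟩‖ ^ 2 := by
      intro i
      rw [PiLp.norm_sq_eq_of_L2]
      refine Finset.sum_congr rfl fun j _ => ?_
      rw [hexch i j, (τ j.val i).norm_map]
      simp [PiLp.sub_apply, PiLp.smul_apply]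
    calc ∑ i : I, ‖R i (φnew i)‖ ^ 2
        = ∑ i : I, ∑ j : {j : I // j ≠ i},
            ‖(β • φold j.val - R j.val (φold j.val)) ⟨i, Ne.symm j.prop⟩‖ ^ 2 :=
          Finset.sum_congr rfl fun i _ => step i
      _ = ∑ j : I, ∑ k : {k : I // k ≠ j},
            ‖(β • φold j - R j (φold j)) k‖ ^ 2 :=
          swap (fun j k => ‖(β • φold j - R j (φold j)) k‖ ^ 2)
      _ = ∑ j : I, ‖β • φold j - R j (φold j)‖ ^ 2 := by
          refine Finset.sum_congr rfl fun j _ => ?_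
          rw [PiLp.norm_sq_eq_of_L2]
  rw [lhs_eq, Finset.mul_sum]
  exact Finset.sum_le_sum fun i _ => key i
end

section
/- Let Λ be a real inner product space, μ > 0, γ > 1/2, and c₀ ∈ [0, 1/2]. Let R : Λ → Λ be a linear map and a : Λ → ℝ a function such that for all φ ∈ Λ: ⟨Rφ, φ⟩ = γ‖φ‖² − (1/(2μ)) a(φ) and a(φ) ≤ (1 − 2c₀) μ ‖φ‖². Then ‖Rφ‖ ≥ (γ − 1/2 + c₀) ‖φ‖ for all φ ∈ Λ; in particular, R is injective. -/
open scoped RealInnerProductSpace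

theorem stmt_3
    {Λ : Type*} [NormedAddCommGroup Λ] [InnerProductSpace ℝ Λ]
    (μ γ c₀ : ℝ) (hμ : 0 < μ) (hγ : 1 / 2 < γ) (hc₀ : 0 ≤ c₀ ∧ c₀ ≤ 1 / 2)
    (R : Λ →ₗ[ℝ] Λ) (a : Λ → ℝ)
    (h1 : ∀ φ : Λ, ⟪R φ, φ⟫ = γ * ‖φ‖ ^ 2 - (1 / (2 * μ)) * a φ)
    (h2 : ∀ φ : Λ, a φ ≤ (1 - 2 * c₀) * μ * ‖φ‖ ^ 2) :
    (∀ φ : Λ, ‖R φ‖ ≥ (γ - 1 / 2 + c₀) * ‖φ‖) ∧ Function.Injective R := by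
  have hpos : 0 < γ - 1 / 2 + c₀ := by linarith [hc₀.1]
  have key : ∀ φ : Λ, ‖R φ‖ ≥ (γ - 1 / 2 + c₀) * ‖φ‖ := by
    intro φ
    by_cases hφ : φ = 0
    · simp [hφ]
    have hn : 0 < ‖φ‖ := norm_pos_iff.mpr hφ
    have hlow : (γ - 1 / 2 + c₀) * ‖φ‖ ^ 2 ≤ ⟪R φ, φ⟫ := by
      rw [h1 φ]
      have h2' := h2 φ
      have hμ' : 0 < 1 / (2 * μ) := by positivity
      have : (1 / (2 * μ)) * a φ ≤ (1 / (2 * μ)) * ((1 - 2 * c₀) * μ * ‖φ‖ ^ 2) :=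
        mul_le_mul_of_nonneg_left h2' hμ'.le
      have heq : (1 / (2 * μ)) * ((1 - 2 * c₀) * μ * ‖φ‖ ^ 2)
          = (1 / 2 - c₀) * ‖φ‖ ^ 2 := by
        field_simp
      nlinarith
    have hcs : ⟪R φ, φ⟫ ≤ ‖R φ‖ * ‖φ‖ := real_inner_le_norm _ _
    have : (γ - 1 / 2 + c₀) * ‖φ‖ * ‖φ‖ ≤ ‖R φ‖ * ‖φ‖ := by nlinarith
    exact le_of_mul_le_mul_right this hn
  refine ⟨key, ?_⟩
  have : ∀ φ : Λ, R φ = 0 → φ = 0 := by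
    intro φ h
    have := key φ
    rw [h, norm_zero] at this
    have : ‖φ‖ ≤ 0 := by nlinarith
    exact norm_le_zero_iff.mp this
  intro x y hxy
  have hz : R (x - y) = 0 := by simp [map_sub, hxy]
  exact sub_eq_zero.mp (this (x - y) hz)
end

section
/- Let M and B be real symmetric n×n matrices with M positive definite, let μ > 0, c_B ∈ (0, 1/2], and γ ∈ (1/2, 1], and assume the quadratic-form bounds 2μ c_B · xᵀMx ≤ xᵀBx ≤ μ · xᵀMx for all x ∈ ℝⁿ. Define r(φ) := γφ − (1/(2μ)) M⁻¹Bφ. Then for all φ ∈ ℝⁿ: (γ − 1/2)·√(φᵀMφ) ≤ √(r(φ)ᵀ M r(φ)) ≤ √(5/2)·√(φᵀMφ). In particular the M-norms of r(φ) and φ are equivalent. -/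
open scoped Matrix

/-!
With respect to the inner product `⟪x, y⟫_M = xᵀMy`, the operator `T = M⁻¹B` satisfies
`‖Tφ‖²_M = (Tφ)ᵀBφ`, so Cauchy–Schwarz for the form of `B` together with `0 ≤ xᵀBx ≤ μ xᵀMx`
gives `‖Tφ‖_M ≤ μ ‖φ‖_M`. Since `r = γ - T / (2μ)`, the triangle inequality then yields
`(γ - 1/2) ‖φ‖_M ≤ ‖r φ‖_M ≤ (γ + 1/2) ‖φ‖_M`, and `γ + 1/2 ≤ 3/2 ≤ √(5/2)`.
-/

namespace Matrix

variable {ι : Type*} [Fintype ι]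

lemma PosSemidef.norm_eq_sqrt_dotProduct_mulVec {A : Matrix ι ι ℝ} (hA : A.PosSemidef)
    (x : ι → ℝ) : @norm _ (A.toSeminormedAddCommGroup hA).toNorm x = √(x ⬝ᵥ A *ᵥ x) := by
  change √((A *ᵥ x) ⬝ᵥ star x) = _
  rw [star_trivial, dotProduct_comm]

lemma PosSemidef.dotProduct_mulVec_sq_le {A : Matrix ι ι ℝ} (hA : A.PosSemidef) (x y : ι → ℝ) :
    (x ⬝ᵥ A *ᵥ y) ^ 2 ≤ (x ⬝ᵥ A *ᵥ x) * (y ⬝ᵥ A *ᵥ y) := by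
  let := A.toSeminormedAddCommGroup hA
  let := A.toInnerProductSpace hA
  have := real_inner_mul_inner_self_le x y
  change (A *ᵥ y) ⬝ᵥ x * ((A *ᵥ y) ⬝ᵥ x) ≤ (A *ᵥ x) ⬝ᵥ x * ((A *ᵥ y) ⬝ᵥ y) at this
  simpa only [sq, dotProduct_comm (A *ᵥ _)] using this

lemma dotProduct_mulVec_le_of_mulVec_eq {M B : Matrix ι ι ℝ} (hM : M.PosSemidef)
    (hB : B.PosSemidef) {μ : ℝ} (hμ : 0 ≤ μ) (hBM : ∀ x, x ⬝ᵥ B *ᵥ x ≤ μ * (x ⬝ᵥ M *ᵥ x))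
    {x y : ι → ℝ} (hy : M *ᵥ y = B *ᵥ x) :
    y ⬝ᵥ M *ᵥ y ≤ μ ^ 2 * (x ⬝ᵥ M *ᵥ x) := by
  set q := y ⬝ᵥ M *ᵥ y
  have hq0 : 0 ≤ q := by simpa using hM.dotProduct_mulVec_nonneg y
  have hxB0 : 0 ≤ x ⬝ᵥ B *ᵥ x := by simpa using hB.dotProduct_mulVec_nonneg x
  have hsq : q ^ 2 ≤ q * (μ * (x ⬝ᵥ B *ᵥ x)) := calc
    q ^ 2 = (y ⬝ᵥ B *ᵥ x) ^ 2 := by rw [← hy]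
    _ ≤ (y ⬝ᵥ B *ᵥ y) * (x ⬝ᵥ B *ᵥ x) := hB.dotProduct_mulVec_sq_le y x
    _ ≤ (μ * q) * (x ⬝ᵥ B *ᵥ x) := mul_le_mul_of_nonneg_right (hBM y) hxB0
    _ = q * (μ * (x ⬝ᵥ B *ᵥ x)) := by ring
  have hqB : q ≤ μ * (x ⬝ᵥ B *ᵥ x) := by
    rcases hq0.eq_or_lt with hq | hq
    · rw [← hq]; positivity
    · exact le_of_mul_le_mul_left (by rwa [← sq]) hq
  calc q ≤ μ * (x ⬝ᵥ B *ᵥ x) := hqB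
    _ ≤ μ * (μ * (x ⬝ᵥ M *ᵥ x)) := mul_le_mul_of_nonneg_left (hBM x) hμ
    _ = μ ^ 2 * (x ⬝ᵥ M *ᵥ x) := by ring

end Matrix

lemma norm_smul_sub_smul_mem_Icc {E : Type*} [SeminormedAddCommGroup E] [NormedSpace ℝ E]
    {γ c a : ℝ} (hγ : 0 ≤ γ) (hc : 0 ≤ c) {φ ψ : E} (hψ : ‖ψ‖ ≤ a * ‖φ‖) :
    (γ - c * a) * ‖φ‖ ≤ ‖γ • φ - c • ψ‖ ∧ ‖γ • φ - c • ψ‖ ≤ (γ + c * a) * ‖φ‖ := by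
  have hγφ : ‖γ • φ‖ = γ * ‖φ‖ := by rw [norm_smul, Real.norm_of_nonneg hγ]
  have hcψ : ‖c • ψ‖ ≤ c * a * ‖φ‖ := by
    rw [norm_smul, Real.norm_of_nonneg hc, mul_assoc]
    exact mul_le_mul_of_nonneg_left hψ hc
  constructor
  · linarith [norm_sub_norm_le (γ • φ) (c • ψ)]
  · linarith [norm_sub_le (γ • φ) (c • ψ)]

theorem stmt_4_general
    {n : ℕ} (M B : Matrix (Fin n) (Fin n) ℝ)
    (hB : B.IsSymm) (hMpd : M.PosDef)
    (μ c_B γ : ℝ) (hμ : 0 < μ) (hcB : 0 < c_B ∧ c_B ≤ 1 / 2)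
    (hγ : 1 / 2 < γ ∧ γ ≤ 1)
    (hlow : ∀ x : Fin n → ℝ, 2 * μ * c_B * (x ⬝ᵥ M.mulVec x) ≤ x ⬝ᵥ B.mulVec x)
    (hhigh : ∀ x : Fin n → ℝ, x ⬝ᵥ B.mulVec x ≤ μ * (x ⬝ᵥ M.mulVec x))
    (r : (Fin n → ℝ) → (Fin n → ℝ))
    (hr : ∀ φ : Fin n → ℝ, r φ = γ • φ - (1 / (2 * μ)) • (M⁻¹ * B).mulVec φ) :
    ∀ φ : Fin n → ℝ,
      (γ - 1 / 2) * Real.sqrt (φ ⬝ᵥ M.mulVec φ) ≤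
          Real.sqrt (r φ ⬝ᵥ M.mulVec (r φ)) ∧
        Real.sqrt (r φ ⬝ᵥ M.mulVec (r φ)) ≤
          Real.sqrt (5 / 2) * Real.sqrt (φ ⬝ᵥ M.mulVec φ) := by
  intro φ
  have hM := hMpd.posSemidef
  have hBpsd : B.PosSemidef := by
    refine .of_dotProduct_mulVec_nonneg (Matrix.isHermitian_iff_isSymm.mpr hB) fun x ↦ ?_
    have hx := hM.dotProduct_mulVec_nonneg x
    simp only [star_trivial] at hx ⊢
    exact (mul_nonneg (by nlinarith) hx).trans (hlow x)
  have hψ : √((M⁻¹ * B) *ᵥ φ ⬝ᵥ M *ᵥ ((M⁻¹ * B) *ᵥ φ)) ≤ μ * √(φ ⬝ᵥ M *ᵥ φ) := by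
    have hMψ : M *ᵥ ((M⁻¹ * B) *ᵥ φ) = B *ᵥ φ := by
      rw [Matrix.mulVec_mulVec, ← Matrix.mul_assoc,
        Matrix.mul_nonsing_inv M hMpd.det_pos.ne'.isUnit, Matrix.one_mul]
    rw [← Real.sqrt_sq hμ.le, ← Real.sqrt_mul (sq_nonneg μ)]
    exact Real.sqrt_le_sqrt (Matrix.dotProduct_mulVec_le_of_mulVec_eq hM hBpsd hμ.le hhigh hMψ)
  obtain ⟨hlo, hhi⟩ := @norm_smul_sub_smul_mem_Icc _ (M.toSeminormedAddCommGroup hM)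
    (M.toInnerProductSpace hM).toNormedSpace γ (1 / (2 * μ)) μ (by linarith) (by positivity) φ
    ((M⁻¹ * B) *ᵥ φ) (by simpa only [hM.norm_eq_sqrt_dotProduct_mulVec] using hψ)
  have hνμ : 1 / (2 * μ) * μ = 1 / 2 := by field_simp
  simp only [hM.norm_eq_sqrt_dotProduct_mulVec, hνμ, ← hr] at hlo hhi
  refine ⟨hlo, hhi.trans (mul_le_mul_of_nonneg_right ?_ (Real.sqrt_nonneg _))⟩
  exact Real.le_sqrt_of_sq_le (by nlinarith)

theorem stmt_4
    {n : ℕ} (M B : Matrix (Fin n) (Fin n) ℝ)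
    (hM : M.IsSymm) (hB : B.IsSymm) (hMpd : M.PosDef)
    (μ c_B γ : ℝ) (hμ : 0 < μ) (hcB : 0 < c_B ∧ c_B ≤ 1 / 2)
    (hγ : 1 / 2 < γ ∧ γ ≤ 1)
    (hlow : ∀ x : Fin n → ℝ, 2 * μ * c_B * (x ⬝ᵥ M.mulVec x) ≤ x ⬝ᵥ B.mulVec x)
    (hhigh : ∀ x : Fin n → ℝ, x ⬝ᵥ B.mulVec x ≤ μ * (x ⬝ᵥ M.mulVec x))
    (r : (Fin n → ℝ) → (Fin n → ℝ))
    (hr : ∀ φ : Fin n → ℝ, r φ = γ • φ - (1 / (2 * μ)) • (M⁻¹ * B).mulVec φ) :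
    ∀ φ : Fin n → ℝ,
      (γ - 1 / 2) * Real.sqrt (φ ⬝ᵥ M.mulVec φ) ≤
          Real.sqrt (r φ ⬝ᵥ M.mulVec (r φ)) ∧
        Real.sqrt (r φ ⬝ᵥ M.mulVec (r φ)) ≤
          Real.sqrt (5 / 2) * Real.sqrt (φ ⬝ᵥ M.mulVec φ) :=
  stmt_4_general M B hB hMpd μ c_B γ hμ hcB hγ hlow hhigh r hr
end

section
/- For every real ζ and every H ∈ (0, 1]: min( H^ζ/(H^{2ζ+1} + 1), H^ζ/(H^{2ζ−1} + 1) ) ≤ √H. Moreover, for ζ = 1/2 this minimum equals √H/2; hence the choice ζ = 1/2 is optimal up to the factor 2, and the best achievable value scales exactly like √H. -/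
theorem stmt_6 (H : ℝ) (hH : 0 < H ∧ H ≤ 1) :
    (∀ ζ : ℝ,
      min (H ^ ζ / (H ^ (2 * ζ + 1) + 1)) (H ^ ζ / (H ^ (2 * ζ - 1) + 1)) ≤
        Real.sqrt H) ∧
    min (H ^ ((1 : ℝ) / 2) / (H ^ (2 * ((1 : ℝ) / 2) + 1) + 1))
        (H ^ ((1 : ℝ) / 2) / (H ^ (2 * ((1 : ℝ) / 2) - 1) + 1)) =
      Real.sqrt H / 2 := by
  obtain ⟨h0, h1⟩ := hH
  have hsqrt : Real.sqrt H = H ^ ((1 : ℝ) / 2) := Real.sqrt_eq_rpow H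
  constructor
  · intro ζ
    refine le_trans (min_le_right _ _) ?_
    rw [div_le_iff₀ (by positivity)]
    have hx : (0:ℝ) < H ^ (ζ - 1/2) := Real.rpow_pos_of_pos h0 _
    have hsq : H ^ (2*ζ - 1) = (H ^ (ζ - 1/2))^2 := by
      rw [← Real.rpow_natCast (H ^ (ζ - 1/2)) 2, ← Real.rpow_mul h0.le]
      norm_num; ring_nf
    have key : 2 * H ^ (ζ - 1/2) ≤ H ^ (2*ζ - 1) + 1 := by
      rw [hsq]; nlinarith [sq_nonneg (H ^ (ζ - 1/2) - 1)]
    have hmul : H ^ ((1:ℝ)/2) * H ^ (ζ - 1/2) = H ^ ζ := by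
      rw [← Real.rpow_add h0]; ring_nf
    have hs : 0 < H ^ ((1:ℝ)/2) := Real.rpow_pos_of_pos h0 _
    calc H ^ ζ ≤ 2 * H ^ ζ := by nlinarith [Real.rpow_pos_of_pos h0 ζ]
    _ = H ^ ((1:ℝ)/2) * (2 * H ^ (ζ - 1/2)) := by rw [← hmul]; ring
    _ ≤ H ^ ((1:ℝ)/2) * (H ^ (2*ζ - 1) + 1) := by
        exact mul_le_mul_of_nonneg_left key hs.le
    _ = Real.sqrt H * (H ^ (2*ζ - 1) + 1) := by rw [hsqrt]
  · have e1 : 2 * ((1:ℝ)/2) + 1 = 2 := by norm_num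
    have e0 : 2 * ((1:ℝ)/2) - 1 = 0 := by norm_num
    rw [e1, e0, Real.rpow_zero]
    have h2 : H ^ (2:ℝ) ≤ 1 := Real.rpow_le_one h0.le h1 (by norm_num)
    have hpos : (0:ℝ) < H ^ (2:ℝ) + 1 := by positivity
    have : H ^ ((1:ℝ)/2) / (1 + 1) ≤ H ^ ((1:ℝ)/2) / (H ^ (2:ℝ) + 1) :=
      div_le_div_of_nonneg_left (by positivity) hpos (by linarith)
    rw [min_eq_right this, hsqrt]
    norm_num
end

section
/- Let M and B be real symmetric n×n matrices with M positive definite and B positive semidefinite, let μ > 0, c_B > 0 and γ ∈ (1/2, 1], and assume 2μ c_B · xᵀMx ≤ xᵀBx ≤ 2μ · xᵀMx for all x ∈ ℝⁿ. Define r(φ) := γφ − (1/(2μ)) M⁻¹Bφ. Then for all φ ∈ ℝⁿ: μ · r(φ)ᵀ M r(φ) ≤ (1 + 1/c_B) · φᵀBφ. -/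
/-!
With `w = M⁻¹Bφ` we have `r(φ) = γφ - w/(2μ)`, so in the `M`-norm
`μ‖r(φ)‖² ≤ 2μγ²‖φ‖² + ‖w‖²/(2μ)`. The lower bound `2μ c_B M ≤ B` gives `2μ‖φ‖² ≤ φᵀBφ / c_B`,
and the upper bound `B ≤ 2μM` gives `‖w‖² = φᵀBM⁻¹Bφ ≤ 2μ φᵀBφ`.
-/

open scoped Matrix

namespace Matrix

theorem PosSemidef.isSymm {ι : Type*} {A : Matrix ι ι ℝ} (hA : A.PosSemidef) : A.IsSymm :=
  isHermitian_iff_isSymm.mp hA.isHermitian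

variable {ι : Type*} [Fintype ι]

theorem IsSymm.dotProduct_mulVec_comm {A : Matrix ι ι ℝ} (hA : A.IsSymm) (x y : ι → ℝ) :
    x ⬝ᵥ A *ᵥ y = y ⬝ᵥ A *ᵥ x := by
  rw [dotProduct_mulVec, ← mulVec_transpose, hA.eq, dotProduct_comm]

theorem PosSemidef.dotProduct_mulVec_sub_le {A : Matrix ι ι ℝ} (hA : A.PosSemidef)
    (x y : ι → ℝ) :
    (x - y) ⬝ᵥ A *ᵥ (x - y) ≤ 2 * (x ⬝ᵥ A *ᵥ x) + 2 * (y ⬝ᵥ A *ᵥ y) := by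
  have hsum : 0 ≤ (x + y) ⬝ᵥ A *ᵥ (x + y) := by
    simpa using hA.dotProduct_mulVec_nonneg (x + y)
  have hswap := hA.isSymm.dotProduct_mulVec_comm x y
  simp only [mulVec_add, mulVec_sub, dotProduct_add, dotProduct_sub, add_dotProduct,
    sub_dotProduct] at hsum ⊢
  linarith

/-- `w` stands for `M⁻¹Bφ`, so this is `φᵀBM⁻¹Bφ ≤ κ φᵀBφ` whenever `B ≤ κM`. -/
theorem PosSemidef.dotProduct_mulVec_le_of_mulVec_eq {M B : Matrix ι ι ℝ} (hB : B.PosSemidef)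
    {κ : ℝ} (hκ : 0 < κ) (hle : ∀ x, x ⬝ᵥ B *ᵥ x ≤ κ * (x ⬝ᵥ M *ᵥ x))
    {φ w : ι → ℝ} (hw : M *ᵥ w = B *ᵥ φ) :
    w ⬝ᵥ M *ᵥ w ≤ κ * (φ ⬝ᵥ B *ᵥ φ) := by
  have hcross : w ⬝ᵥ M *ᵥ w = φ ⬝ᵥ B *ᵥ w := by
    rw [hw, hB.isSymm.dotProduct_mulVec_comm]
  -- expand `0 ≤ (κφ - w)ᵀB(κφ - w)` and bound `wᵀBw` by `κ wᵀMw`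
  have hnonneg : 0 ≤ (κ • φ - w) ⬝ᵥ B *ᵥ (κ • φ - w) := by
    simpa using hB.dotProduct_mulVec_nonneg (κ • φ - w)
  have hswap := hB.isSymm.dotProduct_mulVec_comm φ w
  simp only [mulVec_sub, mulVec_smul, dotProduct_sub, sub_dotProduct, dotProduct_smul,
    smul_dotProduct, smul_eq_mul] at hnonneg
  nlinarith [hle w]

end Matrix

open Matrix in
theorem stmt_11_general
    {n : ℕ} (M B : Matrix (Fin n) (Fin n) ℝ)
    (hMpd : M.PosDef) (hBpsd : B.PosSemidef)
    (μ c_B γ : ℝ) (hμ : 0 < μ) (hcB : 0 < c_B) (hγ : 1 / 2 < γ ∧ γ ≤ 1)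
    (hlow : ∀ x : Fin n → ℝ, 2 * μ * c_B * (x ⬝ᵥ M.mulVec x) ≤ x ⬝ᵥ B.mulVec x)
    (hhigh : ∀ x : Fin n → ℝ, x ⬝ᵥ B.mulVec x ≤ 2 * μ * (x ⬝ᵥ M.mulVec x))
    (r : (Fin n → ℝ) → (Fin n → ℝ))
    (hr : ∀ φ : Fin n → ℝ, r φ = γ • φ - (1 / (2 * μ)) • (M⁻¹ * B).mulVec φ) :
    ∀ φ : Fin n → ℝ,
      μ * (r φ ⬝ᵥ M.mulVec (r φ)) ≤ (1 + 1 / c_B) * (φ ⬝ᵥ B.mulVec φ) := by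
  intro φ
  set w := (M⁻¹ * B) *ᵥ φ
  have hMw : M *ᵥ w = B *ᵥ φ := by
    rw [mulVec_mulVec, mul_nonsing_inv_cancel_left _ _ hMpd.det_pos.ne'.isUnit]
  have hw := hBpsd.dotProduct_mulVec_le_of_mulVec_eq (by positivity) hhigh hMw
  have hsplit := hMpd.posSemidef.dotProduct_mulVec_sub_le (γ • φ) ((1 / (2 * μ)) • w)
  simp only [mulVec_smul, dotProduct_smul, smul_dotProduct, smul_eq_mul] at hsplit
  rw [← hr] at hsplit
  have hφ : 2 * μ * (φ ⬝ᵥ M *ᵥ φ) ≤ (φ ⬝ᵥ B *ᵥ φ) / c_B := by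
    rw [le_div_iff₀ hcB]; linarith [hlow φ]
  have hγsq : γ ^ 2 ≤ 1 := by nlinarith
  have hMφ : 0 ≤ φ ⬝ᵥ M *ᵥ φ := by simpa using hMpd.posSemidef.dotProduct_mulVec_nonneg φ
  calc μ * (r φ ⬝ᵥ M *ᵥ r φ)
      ≤ γ ^ 2 * (2 * μ * (φ ⬝ᵥ M *ᵥ φ)) + (w ⬝ᵥ M *ᵥ w) / (2 * μ) := by
        have := mul_le_mul_of_nonneg_left hsplit hμ.le
        field_simp at this ⊢
        linarith
    _ ≤ 1 * ((φ ⬝ᵥ B *ᵥ φ) / c_B) + φ ⬝ᵥ B *ᵥ φ := by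
        gcongr
        rw [div_le_iff₀ (by positivity)]; linarith
    _ = (1 + 1 / c_B) * (φ ⬝ᵥ B *ᵥ φ) := by ring

theorem stmt_11
    {n : ℕ} (M B : Matrix (Fin n) (Fin n) ℝ)
    (hM : M.IsSymm) (hB : B.IsSymm) (hMpd : M.PosDef) (hBpsd : B.PosSemidef)
    (μ c_B γ : ℝ) (hμ : 0 < μ) (hcB : 0 < c_B) (hγ : 1 / 2 < γ ∧ γ ≤ 1)
    (hlow : ∀ x : Fin n → ℝ, 2 * μ * c_B * (x ⬝ᵥ M.mulVec x) ≤ x ⬝ᵥ B.mulVec x)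
    (hhigh : ∀ x : Fin n → ℝ, x ⬝ᵥ B.mulVec x ≤ 2 * μ * (x ⬝ᵥ M.mulVec x))
    (r : (Fin n → ℝ) → (Fin n → ℝ))
    (hr : ∀ φ : Fin n → ℝ, r φ = γ • φ - (1 / (2 * μ)) • (M⁻¹ * B).mulVec φ) :
    ∀ φ : Fin n → ℝ,
      μ * (r φ ⬝ᵥ M.mulVec (r φ)) ≤ (1 + 1 / c_B) * (φ ⬝ᵥ B.mulVec φ) :=
  stmt_11_general M B hMpd hBpsd μ c_B γ hμ hcB hγ hlow hhigh r hr
end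

section
/- Let K and M be real symmetric n×n matrices with M positive definite and K positive semidefinite, let η ≥ 0, s > 0 with xᵀKx ≤ s·xᵀMx for all x ∈ ℝⁿ, and suppose A_I := K + ηM is invertible. Let G be a real n×m matrix, A_Γ a real symmetric m×m matrix, κ ≥ 0, and define B := Gᵀ A_I⁻¹ G. Assume that for every φ ∈ ℝᵐ, with u := −A_I⁻¹Gφ, the coercivity estimate (1/2)·φᵀA_Γφ − φᵀBφ ≥ η·uᵀMu + κ·φᵀφ holds. Then for every φ ∈ ℝᵐ: φᵀBφ ≤ ((s+η)/(s+2η)) · ( (1/2)·φᵀA_Γφ − κ·φᵀφ ). -/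
/-!
With `v = A_I⁻¹ G φ` one has `φᵀ B φ = vᵀ A_I v`, and the spectral bound `K ≤ s M` gives
`vᵀ A_I v ≤ (s + η) vᵀ M v`. The coercivity hypothesis says that, after subtracting `κ φᵀφ`,
the remaining energy exceeds `φᵀ B φ` by at least `η vᵀ M v ≥ η / (s + η) · φᵀ B φ`;
rearranging gives the factor `(s + η) / (s + 2η)`.
-/

open scoped Matrix

namespace Matrix

variable {ι κ R : Type*} [Fintype ι] [DecidableEq ι] [Fintype κ] [CommRing R]

theorem dotProduct_transpose_mul_inv_mul_mulVec {A : Matrix ι ι R} (hA : IsUnit A)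
    (G : Matrix ι κ R) (φ : κ → R) :
    φ ⬝ᵥ (Gᵀ * A⁻¹ * G) *ᵥ φ = A⁻¹ *ᵥ G *ᵥ φ ⬝ᵥ A *ᵥ (A⁻¹ *ᵥ G *ᵥ φ) := by
  have hdet : IsUnit A.det := (isUnit_iff_isUnit_det A).mp hA
  rw [mulVec_mulVec (M := A), mul_nonsing_inv A hdet, one_mulVec, ← mulVec_mulVec, ← mulVec_mulVec,
    dotProduct_mulVec, vecMul_transpose, dotProduct_comm]

end Matrix

theorem dotProduct_add_smul_mulVec_le {ι : Type*} [Fintype ι] {K M : Matrix ι ι ℝ} {s : ℝ}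
    (η : ℝ) {x : ι → ℝ} (hKM : x ⬝ᵥ K *ᵥ x ≤ s * (x ⬝ᵥ M *ᵥ x)) :
    x ⬝ᵥ (K + η • M) *ᵥ x ≤ (s + η) * (x ⬝ᵥ M *ᵥ x) := by
  rw [Matrix.add_mulVec, Matrix.smul_mulVec, dotProduct_add, dotProduct_smul, smul_eq_mul]
  linarith

theorem le_div_mul_of_le_mul_of_mul_le_sub {b q E η s : ℝ} (hη : 0 ≤ η) (hs : 0 < s)
    (hb : b ≤ (s + η) * q) (hE : η * q ≤ E - b) :
    b ≤ (s + η) / (s + 2 * η) * E := by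
  rw [div_mul_eq_mul_div, le_div_iff₀ (by linarith)]
  nlinarith [mul_le_mul_of_nonneg_left hb hη]

theorem stmt_13_general
    {n m : ℕ} (K M : Matrix (Fin n) (Fin n) ℝ)
    (η s : ℝ) (hη : 0 ≤ η) (hs : 0 < s)
    (hKM : ∀ x : Fin n → ℝ, x ⬝ᵥ K.mulVec x ≤ s * (x ⬝ᵥ M.mulVec x))
    (A_I : Matrix (Fin n) (Fin n) ℝ) (hAI : A_I = K + η • M) (hAIinv : IsUnit A_I)
    (G : Matrix (Fin n) (Fin m) ℝ)
    (A_Γ : Matrix (Fin m) (Fin m) ℝ)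
    (κ : ℝ)
    (B : Matrix (Fin m) (Fin m) ℝ) (hBdef : B = Gᵀ * A_I⁻¹ * G)
    (hcoerc : ∀ φ : Fin m → ℝ,
      (1 / 2) * (φ ⬝ᵥ A_Γ.mulVec φ) - φ ⬝ᵥ B.mulVec φ ≥
        η * ((-(A_I⁻¹.mulVec (G.mulVec φ))) ⬝ᵥ
            M.mulVec (-(A_I⁻¹.mulVec (G.mulVec φ)))) +
          κ * (φ ⬝ᵥ φ)) :
    ∀ φ : Fin m → ℝ,
      φ ⬝ᵥ B.mulVec φ ≤
        ((s + η) / (s + 2 * η)) *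
          ((1 / 2) * (φ ⬝ᵥ A_Γ.mulVec φ) - κ * (φ ⬝ᵥ φ)) := by
  intro φ
  have hcφ := hcoerc φ
  set v := A_I⁻¹ *ᵥ G *ᵥ φ
  rw [Matrix.mulVec_neg, neg_dotProduct, dotProduct_neg, neg_neg] at hcφ
  have hB : φ ⬝ᵥ B *ᵥ φ ≤ (s + η) * (v ⬝ᵥ M *ᵥ v) :=
    calc φ ⬝ᵥ B *ᵥ φ = v ⬝ᵥ A_I *ᵥ v := by
          rw [hBdef, Matrix.dotProduct_transpose_mul_inv_mul_mulVec hAIinv]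
      _ ≤ (s + η) * (v ⬝ᵥ M *ᵥ v) := hAI ▸ dotProduct_add_smul_mulVec_le η (hKM v)
  exact le_div_mul_of_le_mul_of_mul_le_sub hη hs hB (by linarith)

theorem stmt_13
    {n m : ℕ} (K M : Matrix (Fin n) (Fin n) ℝ)
    (hK : K.IsSymm) (hM : M.IsSymm) (hMpd : M.PosDef) (hKpsd : K.PosSemidef)
    (η s : ℝ) (hη : 0 ≤ η) (hs : 0 < s)
    (hKM : ∀ x : Fin n → ℝ, x ⬝ᵥ K.mulVec x ≤ s * (x ⬝ᵥ M.mulVec x))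
    (A_I : Matrix (Fin n) (Fin n) ℝ) (hAI : A_I = K + η • M) (hAIinv : IsUnit A_I)
    (G : Matrix (Fin n) (Fin m) ℝ)
    (A_Γ : Matrix (Fin m) (Fin m) ℝ) (hAΓ : A_Γ.IsSymm)
    (κ : ℝ) (hκ : 0 ≤ κ)
    (B : Matrix (Fin m) (Fin m) ℝ) (hBdef : B = Gᵀ * A_I⁻¹ * G)
    (hcoerc : ∀ φ : Fin m → ℝ,
      (1 / 2) * (φ ⬝ᵥ A_Γ.mulVec φ) - φ ⬝ᵥ B.mulVec φ ≥
        η * ((-(A_I⁻¹.mulVec (G.mulVec φ))) ⬝ᵥ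
            M.mulVec (-(A_I⁻¹.mulVec (G.mulVec φ)))) +
          κ * (φ ⬝ᵥ φ)) :
    ∀ φ : Fin m → ℝ,
      φ ⬝ᵥ B.mulVec φ ≤
        ((s + η) / (s + 2 * η)) *
          ((1 / 2) * (φ ⬝ᵥ A_Γ.mulVec φ) - κ * (φ ⬝ᵥ φ)) :=
  stmt_13_general K M η s hη hs hKM A_I hAI hAIinv G A_Γ κ B hBdef hcoerc
end

section
/- Let A₁, A₂ be real n₁×n₁ and n₂×n₂ matrices, A_Γ an invertible real m×m matrix, A_{1Γ} an n₁×m matrix, A_{2Γ} an n₂×m matrix, f₁ ∈ ℝ^{n₁}, f₂ ∈ ℝ^{n₂}, and γ ∈ ℝ with γ ≠ 1/2. Suppose (v₁, λ₁, v₂, λ₂) ∈ ℝ^{n₁}×ℝ^m×ℝ^{n₂}×ℝ^m solves the augmented system: A₁v₁ + A_{1Γ}λ₁ = f₁; A_{1Γ}ᵀv₁ + γA_Γλ₁ + A_{2Γ}ᵀv₂ + (1−γ)A_Γλ₂ = 0; A₂v₂ + A_{2Γ}λ₂ = f₂; A_{1Γ}ᵀv₁ + (1−γ)A_Γλ₁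 + A_{2Γ}ᵀv₂ + γA_Γλ₂ = 0. Then λ₁ = λ₂ =: λ, and (v₁, v₂, λ) solves the original system A₁v₁ + A_{1Γ}λ = f₁, A₂v₂ + A_{2Γ}λ = f₂, A_{1Γ}ᵀv₁ + A_{2Γ}ᵀv₂ + A_Γλ = 0. Conversely, any solution (u₁, u₂, λ) of the original system gives a solution (u₁, λ, u₂, λ) of the augmented system. -/
open scoped Matrix

theorem stmt_14
    {n₁ n₂ m : ℕ}
    (A₁ : Matrix (Fin n₁) (Fin n₁) ℝ) (A₂ : Matrix (Fin n₂) (Fin n₂) ℝ)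
    (A_Γ : Matrix (Fin m) (Fin m) ℝ) (hAΓ : IsUnit A_Γ)
    (A₁Γ : Matrix (Fin n₁) (Fin m) ℝ) (A₂Γ : Matrix (Fin n₂) (Fin m) ℝ)
    (f₁ : Fin n₁ → ℝ) (f₂ : Fin n₂ → ℝ)
    (γ : ℝ) (hγ : γ ≠ 1 / 2) :
    (∀ (v₁ : Fin n₁ → ℝ) (l₁ : Fin m → ℝ) (v₂ : Fin n₂ → ℝ) (l₂ : Fin m → ℝ),
        A₁.mulVec v₁ + A₁Γ.mulVec l₁ = f₁ →
        A₁Γᵀ.mulVec v₁ + γ • A_Γ.mulVec l₁ + A₂Γᵀ.mulVec v₂ +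
            (1 - γ) • A_Γ.mulVec l₂ = 0 →
        A₂.mulVec v₂ + A₂Γ.mulVec l₂ = f₂ →
        A₁Γᵀ.mulVec v₁ + (1 - γ) • A_Γ.mulVec l₁ + A₂Γᵀ.mulVec v₂ +
            γ • A_Γ.mulVec l₂ = 0 →
        l₁ = l₂ ∧
          A₁.mulVec v₁ + A₁Γ.mulVec l₁ = f₁ ∧
          A₂.mulVec v₂ + A₂Γ.mulVec l₁ = f₂ ∧
          A₁Γᵀ.mulVec v₁ + A₂Γᵀ.mulVec v₂ + A_Γ.mulVec l₁ = 0) ∧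
    (∀ (u₁ : Fin n₁ → ℝ) (u₂ : Fin n₂ → ℝ) (l : Fin m → ℝ),
        A₁.mulVec u₁ + A₁Γ.mulVec l = f₁ →
        A₂.mulVec u₂ + A₂Γ.mulVec l = f₂ →
        A₁Γᵀ.mulVec u₁ + A₂Γᵀ.mulVec u₂ + A_Γ.mulVec l = 0 →
        (A₁.mulVec u₁ + A₁Γ.mulVec l = f₁ ∧
          A₁Γᵀ.mulVec u₁ + γ • A_Γ.mulVec l + A₂Γᵀ.mulVec u₂ +
              (1 - γ) • A_Γ.mulVec l = 0 ∧
          A₂.mulVec u₂ + A₂Γ.mulVec l = f₂ ∧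
          A₁Γᵀ.mulVec u₁ + (1 - γ) • A_Γ.mulVec l + A₂Γᵀ.mulVec u₂ +
              γ • A_Γ.mulVec l = 0)) := by
  constructor
  · intro v₁ l₁ v₂ l₂ h1 h2 h3 h4
    have hx : (2 * γ - 1) • (A_Γ.mulVec l₁ - A_Γ.mulVec l₂) =
        (A₁Γᵀ.mulVec v₁ + γ • A_Γ.mulVec l₁ + A₂Γᵀ.mulVec v₂ +
            (1 - γ) • A_Γ.mulVec l₂) -
        (A₁Γᵀ.mulVec v₁ + (1 - γ) • A_Γ.mulVec l₁ + A₂Γᵀ.mulVec v₂ +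
            γ • A_Γ.mulVec l₂) := by module
    rw [h2, h4, sub_zero] at hx
    have hc : (2 * γ - 1) ≠ 0 := by
      intro h; apply hγ; linarith
    have hll : A_Γ.mulVec l₁ = A_Γ.mulVec l₂ :=
      sub_eq_zero.mp ((smul_eq_zero.mp hx).resolve_left hc)
    have hl : l₁ = l₂ := Matrix.mulVec_injective_iff_isUnit.mpr hAΓ hll
    subst hl
    refine ⟨rfl, h1, h3, ?_⟩
    calc A₁Γᵀ.mulVec v₁ + A₂Γᵀ.mulVec v₂ + A_Γ.mulVec l₁
        = A₁Γᵀ.mulVec v₁ + γ • A_Γ.mulVec l₁ + A₂Γᵀ.mulVec v₂ +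
            (1 - γ) • A_Γ.mulVec l₁ := by module
      _ = 0 := h2
  · intro u₁ u₂ l h1 h2 h3
    refine ⟨h1, ?_, h2, ?_⟩ <;>
    · calc _ = A₁Γᵀ.mulVec u₁ + A₂Γᵀ.mulVec u₂ + A_Γ.mulVec l := by module
        _ = 0 := h3
end
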